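/- Soundness of the orthologic proof system: if a sequent is provable in the orthologic proof system (without non-logical axioms), then every valuation into every ortholattice satisfies it. In particular, if the sequent (φ^L, ψ^R) is provable, then v(φ) ≤ v(ψ) holds for every ortholattice L and every valuation v : X → L. -/

import Mathlib

/-- Propositional formulas over a set `X` of variables. -/
inductive Formula (X : Type) : Type
  | var : X → Formula X
  | bot : Formula X
  | top : Formula X
  | and : Formula X → Formula X → Formula X
  | or : Formula X → Formula X → Formula X
  | not : Formula X → Formula X

/-- An ortholattice: a bounded lattice with a complement operation. -/
class Ortholattice (L : Type) extends Lattice L, BoundedOrder L where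
  compl : L → L
  compl_compl : ∀ x : L, compl (compl x) = x
  compl_sup : ∀ x y : L, compl (x ⊔ y) = compl x ⊓ compl y
  compl_inf : ∀ x y : L, compl (x ⊓ y) = compl x ⊔ compl y
  inf_compl : ∀ x : L, x ⊓ compl x = ⊥
  sup_compl : ∀ x : L, x ⊔ compl x = ⊤

/-- Homomorphic extension of a valuation `v : X → L` to formulas. -/
def Formula.eval {X L : Type} [Ortholattice L] (v : X → L) : Formula X → L
  | .var x => v x
  | .bot => ⊥
  | .top => ⊤
  | .and φ ψ => φ.eval v ⊓ ψ.eval v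
  | .or φ ψ => φ.eval v ⊔ ψ.eval v
  | .not φ => Ortholattice.compl (φ.eval v)

/-- Annotated formulas: a formula marked as left (`L`) or right (`R`). -/
inductive Ann (X : Type) : Type
  | L : Formula X → Ann X
  | R : Formula X → Ann X

/-- The underlying formula of an annotated formula. -/
def Ann.fml {X : Type} : Ann X → Formula X
  | .L φ => φ
  | .R φ => φ

/-- An orthologic sequent: an unordered pair of annotated formulas. -/
abbrev Sequent (X : Type) := Sym2 (Ann X)

/-- The orthologic proof system, with non-logical axioms `A`. -/
inductive OLProof {X : Type} (A : Set (Sequent X)) : Sequent X → Prop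
  | ax {t : Sequent X} : t ∈ A → OLProof A t
  | hyp (φ : Formula X) : OLProof A s(Ann.L φ, Ann.R φ)
  | cut (Γ Δ : Ann X) (φ : Formula X) :
      OLProof A s(Γ, Ann.R φ) → OLProof A s(Ann.L φ, Δ) → OLProof A s(Γ, Δ)
  | replace (Γ Δ : Ann X) : OLProof A s(Γ, Γ) → OLProof A s(Γ, Δ)
  | andL₁ (φ ψ : Formula X) (Δ : Ann X) :
      OLProof A s(Ann.L φ, Δ) → OLProof A s(Ann.L (φ.and ψ), Δ)
  | andL₂ (φ ψ : Formula X) (Δ : Ann X) :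
      OLProof A s(Ann.L ψ, Δ) → OLProof A s(Ann.L (φ.and ψ), Δ)
  | andR (Γ : Ann X) (φ ψ : Formula X) :
      OLProof A s(Γ, Ann.R φ) → OLProof A s(Γ, Ann.R ψ) → OLProof A s(Γ, Ann.R (φ.and ψ))
  | orL (φ ψ : Formula X) (Δ : Ann X) :
      OLProof A s(Ann.L φ, Δ) → OLProof A s(Ann.L ψ, Δ) → OLProof A s(Ann.L (φ.or ψ), Δ)
  | orR₁ (Γ : Ann X) (φ ψ : Formula X) :
      OLProof A s(Γ, Ann.R φ) → OLProof A s(Γ, Ann.R (φ.or ψ))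
  | orR₂ (Γ : Ann X) (φ ψ : Formula X) :
      OLProof A s(Γ, Ann.R ψ) → OLProof A s(Γ, Ann.R (φ.or ψ))
  | negL (Γ : Ann X) (φ : Formula X) :
      OLProof A s(Γ, Ann.R φ) → OLProof A s(Γ, Ann.L φ.not)
  | negR (φ : Formula X) (Δ : Ann X) :
      OLProof A s(Ann.L φ, Δ) → OLProof A s(Ann.R φ.not, Δ)
  | botL (Δ : Ann X) : OLProof A s(Ann.L Formula.bot, Δ)
  | topR (Γ : Ann X) : OLProof A s(Γ, Ann.R Formula.top)

/-- Satisfaction of an (ordered) pair of annotated formulas by a valuation. -/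
def AnnSat {X L : Type} [Ortholattice L] (v : X → L) : Ann X → Ann X → Prop
  | .L φ, .R ψ => φ.eval v ≤ ψ.eval v
  | .R φ, .L ψ => ψ.eval v ≤ φ.eval v
  | .L φ, .L ψ => φ.eval v ⊓ ψ.eval v = ⊥
  | .R φ, .R ψ => φ.eval v ⊔ ψ.eval v = ⊤

/-- A valuation satisfies a sequent. -/
def SeqSat {X L : Type} [Ortholattice L] (v : X → L) (t : Sequent X) : Prop :=
  ∀ a b : Ann X, t = s(a, b) → AnnSat v a b
/-- Boolean (classical) evaluation of a formula. -/
def Formula.evalB {X : Type} (v : X → Bool) : Formula X → Bool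
  | .var x => v x
  | .bot => false
  | .top => true
  | .and φ ψ => φ.evalB v && ψ.evalB v
  | .or φ ψ => φ.evalB v || ψ.evalB v
  | .not φ => !(φ.evalB v)

/-- Size of a formula (number of nodes). -/
def Formula.size {X : Type} : Formula X → Nat
  | .var _ => 1
  | .bot => 1
  | .top => 1
  | .and φ ψ => φ.size + ψ.size + 1
  | .or φ ψ => φ.size + ψ.size + 1
  | .not φ => φ.size + 1

/-- Negation normal form. -/
def Formula.nnf {X : Type} : Formula X → Formula X
  | .var x => .var x
  | .bot => .bot
  | .top => .top
  | .and φ ψ => .and φ.nnf ψ.nnf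
  | .or φ ψ => .or φ.nnf ψ.nnf
  | .not (.var x) => .not (.var x)
  | .not .bot => .top
  | .not .top => .bot
  | .not (.and φ ψ) => .or φ.not.nnf ψ.not.nnf
  | .not (.or φ ψ) => .and φ.not.nnf ψ.not.nnf
  | .not (.not φ) => φ.nnf
termination_by φ => φ.size
decreasing_by all_goals (simp [Formula.size]; try omega)

/-- A formula is in NNF if negation occurs only directly on variables. -/
def Formula.IsNNF {X : Type} : Formula X → Prop
  | .var _ => True
  | .bot => True
  | .top => True
  | .and φ ψ => φ.IsNNF ∧ ψ.IsNNF
  | .or φ ψ => φ.IsNNF ∧ ψ.IsNNF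
  | .not (.var _) => True
  | .not _ => False

/-- `getInverse φ = nnf (¬ φ)`. -/
def getInverse {X : Type} (φ : Formula X) : Formula X := φ.not.nnf

/-- Orthologic equivalence of formulas (without non-logical axioms). -/
def OLEquiv {X : Type} (φ ψ : Formula X) : Prop :=
  OLProof (∅ : Set (Sequent X)) s(Ann.L φ, Ann.R ψ) ∧
  OLProof (∅ : Set (Sequent X)) s(Ann.L ψ, Ann.R φ)

/-- `Subformula γ φ` means `γ` is a subformula of `φ`. -/
inductive Subformula {X : Type} : Formula X → Formula X → Prop
  | refl (φ : Formula X) : Subformula φ φ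
  | and_left {γ φ ψ : Formula X} : Subformula γ φ → Subformula γ (φ.and ψ)
  | and_right {γ φ ψ : Formula X} : Subformula γ ψ → Subformula γ (φ.and ψ)
  | or_left {γ φ ψ : Formula X} : Subformula γ φ → Subformula γ (φ.or ψ)
  | or_right {γ φ ψ : Formula X} : Subformula γ ψ → Subformula γ (φ.or ψ)
  | not_sub {γ φ : Formula X} : Subformula γ φ → Subformula γ φ.not

/-! Read `φ^L` as `v φ` and `φ^R` as `(v φ)ᶜ`, and a sequent `(a, b)` as the orthogonality
`⟦a⟧ ≤ ⟦b⟧ᶜ` of the two readings. Orthogonality is symmetric, so it is a property of unordered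
pairs; every rule preserves it; and it implies satisfaction. Satisfaction itself is not an
invariant: for `(L, L)` and `(R, R)` pairs it only asks `x ⊓ y = ⊥` resp. `x ⊔ y = ⊤`, which
¬-L and ∧-R do not preserve outside Boolean algebras. -/

namespace Ortholattice

variable {L : Type} [Ortholattice L] {x y : L}

theorem compl_le_compl (h : x ≤ y) : compl y ≤ compl x := by
  rw [← sup_eq_right.2 h, compl_sup]
  exact inf_le_left

theorem le_compl_comm : x ≤ compl y ↔ y ≤ compl x :=
  ⟨fun h => by simpa only [compl_compl] using compl_le_compl h,
    fun h => by simpa only [compl_compl] using compl_le_compl h⟩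

theorem inf_eq_bot_of_le_compl (h : x ≤ compl y) : x ⊓ y = ⊥ :=
  le_bot_iff.1 <| calc
    x ⊓ y ≤ compl y ⊓ y := inf_le_inf_right y h
    _ = ⊥ := by rw [inf_comm, inf_compl]

theorem eq_bot_of_le_compl (h : x ≤ compl x) : x = ⊥ :=
  inf_idem x ▸ inf_eq_bot_of_le_compl h

theorem sup_eq_top_of_compl_le (h : compl x ≤ y) : x ⊔ y = ⊤ :=
  top_le_iff.1 <| calc
    ⊤ = x ⊔ compl x := (sup_compl x).symm
    _ ≤ x ⊔ y := sup_le_sup_left h x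

end Ortholattice

section

variable {X L : Type} [Ortholattice L] {v : X → L}

def Ann.interp (v : X → L) : Ann X → L
  | .L φ => φ.eval v
  | .R φ => Ortholattice.compl (φ.eval v)

def Ann.Orth (v : X → L) (a b : Ann X) : Prop :=
  a.interp v ≤ Ortholattice.compl (b.interp v)

theorem Ann.Orth.symm {a b : Ann X} (h : Ann.Orth v a b) : Ann.Orth v b a :=
  Ortholattice.le_compl_comm.1 h

theorem Ann.orth_R_iff {a : Ann X} {φ : Formula X} :
    Ann.Orth v a (.R φ) ↔ a.interp v ≤ φ.eval v := by
  rw [Ann.Orth, Ann.interp, Ortholattice.compl_compl]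

theorem Ann.Orth.annSat {a b : Ann X} (h : Ann.Orth v a b) : AnnSat v a b := by
  cases a <;> cases b
  case L.L => exact Ortholattice.inf_eq_bot_of_le_compl h
  case L.R => exact Ann.orth_R_iff.1 h
  case R.L => exact Ann.orth_R_iff.1 h.symm
  case R.R => exact Ortholattice.sup_eq_top_of_compl_le (Ann.orth_R_iff.1 h)

def Sequent.Orth (v : X → L) : Sequent X → Prop :=
  Sym2.lift ⟨Ann.Orth v, fun _ _ => propext ⟨Ann.Orth.symm, Ann.Orth.symm⟩⟩

theorem Sequent.Orth.seqSat {t : Sequent X} (h : Sequent.Orth v t) : SeqSat v t := by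
  rintro a b rfl
  exact Ann.Orth.annSat h

theorem OLProof.orth {A : Set (Sequent X)} {t : Sequent X} (h : OLProof A t)
    (hA : ∀ s ∈ A, Sequent.Orth v s) : Sequent.Orth v t := by
  induction h with
  | ax hs => exact hA _ hs
  | hyp φ => exact Ann.orth_R_iff.2 le_rfl
  | cut Γ Δ φ _ _ ihΓ ihΔ => exact (Ann.orth_R_iff.1 ihΓ).trans ihΔ
  | replace Γ Δ _ ih => exact (Ortholattice.eq_bot_of_le_compl ih).trans_le bot_le
  | andL₁ φ ψ Δ _ ih => exact inf_le_left.trans ih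
  | andL₂ φ ψ Δ _ ih => exact inf_le_right.trans ih
  | andR Γ φ ψ _ _ ihφ ihψ =>
      exact Ann.orth_R_iff.2 (le_inf (Ann.orth_R_iff.1 ihφ) (Ann.orth_R_iff.1 ihψ))
  | orL φ ψ Δ _ _ ihφ ihψ => exact sup_le ihφ ihψ
  | orR₁ Γ φ ψ _ ih => exact Ann.orth_R_iff.2 ((Ann.orth_R_iff.1 ih).trans le_sup_left)
  | orR₂ Γ φ ψ _ ih => exact Ann.orth_R_iff.2 ((Ann.orth_R_iff.1 ih).trans le_sup_right)
  | negL Γ φ _ ih => exact ih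
  | negR φ Δ _ ih => exact (Ortholattice.compl_compl _).trans_le ih
  | botL Δ => exact bot_le
  | topR Γ => exact Ann.orth_R_iff.2 le_top

end

theorem ol_soundness_general {X : Type} :
    (∀ t : Sequent X, OLProof (∅ : Set (Sequent X)) t →
      ∀ (L : Type) [Ortholattice L] (v : X → L), SeqSat v t) ∧
    (∀ φ ψ : Formula X, OLProof (∅ : Set (Sequent X)) s(Ann.L φ, Ann.R ψ) →
      ∀ (L : Type) [Ortholattice L] (v : X → L), φ.eval v ≤ ψ.eval v) := by
  have sound (t : Sequent X) (h : OLProof ∅ t) (L : Type) [Ortholattice L] (v : X → L) :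
      SeqSat v t :=
    (h.orth fun _ hs => absurd hs (Set.notMem_empty _)).seqSat
  exact ⟨sound, fun φ ψ h L _ v => sound _ h L v (.L φ) (.R ψ) rfl⟩

/-- Soundness of the orthologic proof system (without non-logical
axioms): every provable sequent is satisfied by every valuation into every
ortholattice; in particular if `(φ^L, ψ^R)` is provable then `v(φ) ≤ v(ψ)`. -/
theorem ol_soundness {X : Type} [Countable X] [Infinite X] :
    (∀ t : Sequent X, OLProof (∅ : Set (Sequent X)) t →
      ∀ (L : Type) [Ortholattice L] (v : X → L), SeqSat v t) ∧
    (∀ φ ψ : Formula X, OLProof (∅ : Set (Sequent X)) s(Ann.L φ, Ann.R ψ) →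
      ∀ (L : Type) [Ortholattice L] (v : X → L), φ.eval v ≤ ψ.eval v) :=
  ol_soundness_general
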